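/- arXiv:1409.0454 — 2 statements merged into one kernel-verified Lean document; each statement's English description precedes it below -/
import Mathlib

section
/- For the channel of Example 2, let 𝒱 be any finite set and let (S,V,X₁,X₂) have joint pmf of the product form Q_S(s₀,s₁)·P_{X₂}(x₂)·P_{X₁|X₂}(x₁|x₂)·P_{V|S,X₂}(v|s₀,s₁,x₂), where Q_S is the law of the i.i.d. pair (S₀,S₁), and let Y = (X₁ ⊕ S_{X₁⊕X₂}, X₂). If I(X₁ ; Y | V,X₂) ≥ 1, then H(X₁) = 1 (X₁ is uniform on {0,1}), X₁ is independent of the triple (S,V,X₂), and H(S_{X₁⊕X₂} | V,X₁,X₂) = 0. -/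
open scoped BigOperators
open Classical

noncomputable section

/-- Probability that the random variable `X` equals `x` under the pmf `p`. -/
def pr {Ω α : Type*} [Fintype Ω] (p : Ω → ℝ) (X : Ω → α) (x : α) : ℝ :=
  ∑ ω : Ω, if X ω = x then p ω else 0

/-- Shannon entropy (in bits), with the convention `0 · log₂ 0 = 0`. -/
def ent {Ω α : Type*} [Fintype Ω] (p : Ω → ℝ) (X : Ω → α) : ℝ :=
  -∑ x ∈ Finset.univ.image X, pr p X x * Real.logb 2 (pr p X x)

/-- Conditional entropy `H(X|Y) = H(X,Y) - H(Y)`. -/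
def condEnt {Ω α β : Type*} [Fintype Ω] (p : Ω → ℝ) (X : Ω → α) (Y : Ω → β) : ℝ :=
  ent p (fun ω => (X ω, Y ω)) - ent p Y

/-- Mutual information `I(X;Y) = H(X) + H(Y) - H(X,Y)`. -/
def mi {Ω α β : Type*} [Fintype Ω] (p : Ω → ℝ) (X : Ω → α) (Y : Ω → β) : ℝ :=
  ent p X + ent p Y - ent p (fun ω => (X ω, Y ω))

/-- Conditional mutual information `I(X;Y|Z) = H(X,Z) + H(Y,Z) - H(X,Y,Z) - H(Z)`. -/
def cmi {Ω α β γ : Type*} [Fintype Ω] (p : Ω → ℝ) (X : Ω → α) (Y : Ω → β) (Z : Ω → γ) : ℝ :=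
  ent p (fun ω => (X ω, Z ω)) + ent p (fun ω => (Y ω, Z ω))
    - ent p (fun ω => (X ω, Y ω, Z ω)) - ent p Z

/-- `p` is a probability mass function on the finite sample space `Ω`. -/
def IsPMF {Ω : Type*} [Fintype Ω] (p : Ω → ℝ) : Prop :=
  (∀ ω, 0 ≤ p ω) ∧ ∑ ω : Ω, p ω = 1

/-- The random variables `X` and `Y` are independent under `p`. -/
def IndepRV {Ω α β : Type*} [Fintype Ω] (p : Ω → ℝ) (X : Ω → α) (Y : Ω → β) : Prop :=
  ∀ x y, pr p (fun ω => (X ω, Y ω)) (x, y) = pr p X x * pr p Y y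

end

noncomputable section
/-! The channel of Example 2:  `𝒳₁ = 𝒳₂ = {0,1}`, state `S = (S₀,S₁)` with `S₀,S₁`
i.i.d. Bernoulli(`p₀`) where `h₂(p₀) = 1/2`, output `Y = (X₁ ⊕ S_{X₁⊕X₂}, X₂)`. -/

/-- Binary entropy function `h₂` (in bits). -/
def binEnt (a : ℝ) : ℝ := -(a * Real.logb 2 a) - (1 - a) * Real.logb 2 (1 - a)

/-- The state pmf of Example 2: `S = (S₀,S₁)` i.i.d. Bernoulli(`p₀`). -/
def QS2 (p₀ : ℝ) : Bool × Bool → ℝ :=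
  fun s => (if s.1 then p₀ else 1 - p₀) * (if s.2 then p₀ else 1 - p₀)

/-- The (deterministic) channel kernel of Example 2:
`Y = (X₁ ⊕ S_{X₁⊕X₂}, X₂)` where `S_{X₁⊕X₂} = S₀` if `X₁ = X₂` and `S₁` otherwise. -/
def W2 : Bool × Bool → Bool → Bool → Bool × Bool → ℝ :=
  fun y x1 x2 s => if y = (Bool.xor x1 (if x1 = x2 then s.1 else s.2), x2) then 1 else 0

end

/-!
Write `T = S_{X₁⊕X₂}` and `Z = (V,X₂)`. Since `I(X₁;Y|Z) ≤ H(X₁|Z) ≤ H(X₁) ≤ 1`, the hypothesis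
forces `H(X₁) = 1` and `H(X₁|Z) = H(X₁)`; the latter is the equality case of subadditivity of
entropy (Gibbs' inequality), i.e. `X₁` is independent of `(V,X₂)`.
Since `Y = (X₁ ⊕ T, X₂)` carries at most one bit beyond `Z`,
`I(X₁;Y|Z) = H(Y|Z) - H(Y|X₁,Z) ≤ 1 - H(Y|X₁,Z)`, so `H(Y|X₁,Z) = 0`; given `X₁`, the output `Y`
and the state bit `T` determine each other, hence `H(T|V,X₁,X₂) = 0`.
Finally, the product form makes `(S,V) - X₂ - X₁` a Markov chain, so independence of `X₁` from `X₂`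
upgrades to independence from `(S,V,X₂)`.
-/

open Real InformationTheory

section Gibbs

lemma mul_log_sub_log_sub_eq_mul_klFun {q r : ℝ} (hq : 0 ≤ q) (hr : 0 < r) :
    q * (log q - log r) - (q - r) = r * klFun (q / r) := by
  rcases hq.eq_or_lt with rfl | hq
  · simp [klFun]
  · rw [klFun_apply, log_div hq.ne' hr.ne']
    field_simp
    ring

lemma sub_le_mul_log_sub_log {q r : ℝ} (hq : 0 ≤ q) (hr : 0 ≤ r) (hqr : 0 < q → 0 < r) :
    q - r ≤ q * (log q - log r) := by
  rcases hr.eq_or_lt with rfl | hr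
  · simp [(not_lt.1 fun h => (hqr h).false).antisymm hq]
  · have := mul_nonneg hr.le (klFun_nonneg (div_nonneg hq hr.le))
    linarith [mul_log_sub_log_sub_eq_mul_klFun hq hr]

lemma eq_of_mul_log_sub_log_le_sub {q r : ℝ} (hq : 0 ≤ q) (hr : 0 ≤ r) (hqr : 0 < q → 0 < r)
    (h : q * (log q - log r) ≤ q - r) : q = r := by
  rcases hr.eq_or_lt with rfl | hr
  · exact (not_lt.1 fun h => (hqr h).false).antisymm hq
  · have hkl : klFun (q / r) = 0 := by
      have := mul_nonneg hr.le (klFun_nonneg (div_nonneg hq hr.le))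
      have := mul_log_sub_log_sub_eq_mul_klFun hq hr
      exact (mul_eq_zero.1 (by linarith)).resolve_left hr.ne'
    rwa [klFun_eq_zero_iff (div_nonneg hq hr.le), div_eq_one_iff_eq hr.ne'] at hkl

variable {ι : Type*} [Fintype ι] {q r : ι → ℝ}

lemma sum_mul_logb_sub_sum_mul_logb (q r : ι → ℝ) :
    ∑ i, q i * logb 2 (q i) - ∑ i, q i * logb 2 (r i)
      = (∑ i, (q i * (log (q i) - log (r i)) - (q i - r i)) + (∑ i, q i - ∑ i, r i)) / log 2 := by
  rw [← Finset.sum_sub_distrib, ← Finset.sum_sub_distrib,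
    ← Finset.sum_add_distrib, Finset.sum_div]
  exact Finset.sum_congr rfl fun i _ => by simp only [logb]; ring

theorem sum_mul_logb_le_sum_mul_logb (hq : ∀ i, 0 ≤ q i) (hr : ∀ i, 0 ≤ r i)
    (hqr : ∀ i, 0 < q i → 0 < r i) (hsum : ∑ i, r i ≤ ∑ i, q i) :
    ∑ i, q i * logb 2 (r i) ≤ ∑ i, q i * logb 2 (q i) := by
  have hgap : 0 ≤ ∑ i, (q i * (log (q i) - log (r i)) - (q i - r i)) :=
    Finset.sum_nonneg fun i _ => sub_nonneg.2 (sub_le_mul_log_sub_log (hq i) (hr i) (hqr i))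
  rw [← sub_nonneg, sum_mul_logb_sub_sum_mul_logb]
  exact div_nonneg (by linarith) (log_nonneg one_le_two)

theorem eq_of_sum_mul_logb_le (hq : ∀ i, 0 ≤ q i) (hr : ∀ i, 0 ≤ r i)
    (hqr : ∀ i, 0 < q i → 0 < r i) (hsum : ∑ i, r i ≤ ∑ i, q i)
    (h : ∑ i, q i * logb 2 (q i) ≤ ∑ i, q i * logb 2 (r i)) : q = r := by
  have hterm i : 0 ≤ q i * (log (q i) - log (r i)) - (q i - r i) :=
    sub_nonneg.2 (sub_le_mul_log_sub_log (hq i) (hr i) (hqr i))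
  have hgap : ∑ i, (q i * (log (q i) - log (r i)) - (q i - r i)) = 0 := by
    have hnum : (∑ i, (q i * (log (q i) - log (r i)) - (q i - r i)) + (∑ i, q i - ∑ i, r i))
        / log 2 ≤ 0 := by
      rw [← sum_mul_logb_sub_sum_mul_logb]
      linarith
    rw [div_le_iff₀ (log_pos one_lt_two), zero_mul] at hnum
    linarith [Finset.sum_nonneg fun i (_ : i ∈ Finset.univ) => hterm i]
  funext i
  refine eq_of_mul_log_sub_log_le_sub (hq i) (hr i) (hqr i) (sub_nonpos.1 ?_)
  exact ((Finset.sum_eq_zero_iff_of_nonneg fun i _ => hterm i).1 hgap i (Finset.mem_univ i)).le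

end Gibbs

section Entropy

variable {Ω α β γ : Type*} [Fintype Ω] {p : Ω → ℝ}

lemma sum_pr_mul {X : Ω → α} (s : Finset α) (hs : ∀ ω, X ω ∈ s) (g : α → ℝ) :
    ∑ x ∈ s, pr p X x * g x = ∑ ω, p ω * g (X ω) := by
  simp only [pr, Finset.sum_mul, ite_mul, zero_mul]
  rw [Finset.sum_comm]
  exact Finset.sum_congr rfl fun ω _ => by rw [Finset.sum_ite_eq, if_pos (hs ω)]

lemma sum_pr [Fintype α] (hp : IsPMF p) (X : Ω → α) : ∑ x, pr p X x = 1 := by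
  simpa [hp.2] using sum_pr_mul (p := p) (X := X) Finset.univ (fun _ => Finset.mem_univ _) 1

lemma ent_eq_sum (X : Ω → α) : ent p X = -∑ ω, p ω * logb 2 (pr p X (X ω)) := by
  rw [ent, sum_pr_mul _ fun ω => Finset.mem_image_of_mem X (Finset.mem_univ ω)]

lemma ent_eq_sum_univ [Fintype α] (X : Ω → α) :
    ent p X = -∑ x, pr p X x * logb 2 (pr p X x) := by
  rw [ent_eq_sum, sum_pr_mul _ fun _ => Finset.mem_univ _]

lemma pr_congr {X : Ω → α} {Y : Ω → β} {x : α} {y : β} (h : ∀ ω, X ω = x ↔ Y ω = y) :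
    pr p X x = pr p Y y :=
  Finset.sum_congr rfl fun ω _ => by simp only [h]

lemma pr_nonneg (hp : ∀ ω, 0 ≤ p ω) (X : Ω → α) (x : α) : 0 ≤ pr p X x :=
  Finset.sum_nonneg fun ω _ => by split_ifs <;> simp [hp ω]

lemma pr_le_pr_comp (hp : ∀ ω, 0 ≤ p ω) (X : Ω → α) (f : α → β) (x : α) :
    pr p X x ≤ pr p (fun ω => f (X ω)) (f x) :=
  Finset.sum_le_sum fun ω _ => by
    split_ifs <;> simp_all

lemma le_pr_self (hp : ∀ ω, 0 ≤ p ω) (X : Ω → α) (ω : Ω) : p ω ≤ pr p X (X ω) := by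
  unfold pr
  simpa using Finset.single_le_sum (f := fun ω' => if X ω' = X ω then p ω' else 0)
    (fun ω' _ => by split_ifs <;> simp [hp ω']) (Finset.mem_univ ω)

lemma pr_eq_sum_pr_pair [Fintype α] (X : Ω → α) (Y : Ω → β) (y : β) :
    pr p Y y = ∑ x, pr p (fun ω => (X ω, Y ω)) (x, y) := by
  simp only [pr, Prod.mk.injEq, ite_and]
  rw [Finset.sum_comm]
  exact Finset.sum_congr rfl fun ω _ => by simp

lemma ent_comp_le (hp : ∀ ω, 0 ≤ p ω) (X : Ω → α) (f : α → β) :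
    ent p (fun ω => f (X ω)) ≤ ent p X := by
  rw [ent_eq_sum, ent_eq_sum, neg_le_neg_iff]
  refine Finset.sum_le_sum fun ω _ => ?_
  rcases (hp ω).eq_or_lt with h | h
  · simp [← h]
  · have hpos : 0 < pr p X (X ω) := h.trans_le (le_pr_self hp X ω)
    exact mul_le_mul_of_nonneg_left
      (logb_le_logb_of_le one_lt_two hpos (pr_le_pr_comp hp X f (X ω))) h.le

lemma ent_eq_of_comp (hp : ∀ ω, 0 ≤ p ω) {X : Ω → α} {Y : Ω → β} (f : α → β) (g : β → α)
    (hf : ∀ ω, Y ω = f (X ω)) (hg : ∀ ω, X ω = g (Y ω)) : ent p X = ent p Y := by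
  have hY : Y = fun ω => f (X ω) := funext hf
  have hX : X = fun ω => g (Y ω) := funext hg
  refine le_antisymm ?_ ?_
  · conv_lhs => rw [hX]
    exact ent_comp_le hp Y g
  · conv_lhs => rw [hY]
    exact ent_comp_le hp X f

lemma ent_le_logb_card [Fintype α] (hp : IsPMF p) (X : Ω → α) :
    ent p X ≤ logb 2 (Fintype.card α) := by
  have hcard : ∀ x, 0 < pr p X x → (0 : ℝ) < (Fintype.card α : ℝ)⁻¹ := fun x _ =>
    inv_pos.2 (Nat.cast_pos.2 (Fintype.card_pos_iff.2 ⟨x⟩))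
  have hsum : ∑ _x : α, (Fintype.card α : ℝ)⁻¹ ≤ ∑ x, pr p X x := by
    rw [sum_pr hp, Finset.sum_const, Finset.card_univ, nsmul_eq_mul]
    exact mul_inv_le_one
  have := sum_mul_logb_le_sum_mul_logb (pr_nonneg hp.1 X) (fun _ => by positivity) hcard hsum
  rw [← Finset.sum_mul, sum_pr hp, one_mul, logb_inv] at this
  rw [ent_eq_sum_univ]
  linarith

lemma ent_le_one_of_bool (hp : IsPMF p) (X : Ω → Bool) : ent p X ≤ 1 := by
  simpa using ent_le_logb_card hp X

lemma pr_pos_of_pr_pair_pos (hp : ∀ ω, 0 ≤ p ω) (X : Ω → α) (Y : Ω → β) {x : α} {y : β}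
    (h : 0 < pr p (fun ω => (X ω, Y ω)) (x, y)) : 0 < pr p X x ∧ 0 < pr p Y y :=
  ⟨h.trans_le (pr_le_pr_comp hp _ Prod.fst (x, y)), h.trans_le (pr_le_pr_comp hp _ Prod.snd (x, y))⟩

lemma ent_add_ent_eq_sum [Fintype α] [Fintype β] (hp : ∀ ω, 0 ≤ p ω) (X : Ω → α) (Y : Ω → β) :
    ent p X + ent p Y = -∑ xy : α × β,
      pr p (fun ω => (X ω, Y ω)) xy * logb 2 (pr p X xy.1 * pr p Y xy.2) := by
  have hsplit : ∀ xy : α × β, pr p (fun ω => (X ω, Y ω)) xy * logb 2 (pr p X xy.1 * pr p Y xy.2)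
      = pr p (fun ω => (X ω, Y ω)) xy * logb 2 (pr p X xy.1)
        + pr p (fun ω => (X ω, Y ω)) xy * logb 2 (pr p Y xy.2) := by
    rintro ⟨x, y⟩
    rcases (pr_nonneg hp (fun ω => (X ω, Y ω)) (x, y)).eq_or_lt with h | h
    · simp [← h]
    · obtain ⟨hx, hy⟩ := pr_pos_of_pr_pair_pos hp X Y h
      rw [logb_mul hx.ne' hy.ne', mul_add]
  have hmem : ∀ ω, (X ω, Y ω) ∈ (Finset.univ : Finset (α × β)) := fun _ => Finset.mem_univ _
  rw [Finset.sum_congr rfl fun xy _ => hsplit xy, Finset.sum_add_distrib,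
    sum_pr_mul _ hmem fun xy => logb 2 (pr p X xy.1),
    sum_pr_mul _ hmem fun xy => logb 2 (pr p Y xy.2), ent_eq_sum, ent_eq_sum]
  ring

lemma sum_pr_mul_pr [Fintype α] [Fintype β] (hp : IsPMF p) (X : Ω → α) (Y : Ω → β) :
    ∑ xy : α × β, pr p X xy.1 * pr p Y xy.2 = 1 := by
  rw [Fintype.sum_prod_type, ← Finset.sum_mul_sum, sum_pr hp, sum_pr hp, one_mul]

lemma ent_pair_le_add [Fintype α] [Fintype β] (hp : IsPMF p) (X : Ω → α) (Y : Ω → β) :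
    ent p (fun ω => (X ω, Y ω)) ≤ ent p X + ent p Y := by
  rw [ent_eq_sum_univ (fun ω => (X ω, Y ω)), ent_add_ent_eq_sum hp.1, neg_le_neg_iff]
  refine sum_mul_logb_le_sum_mul_logb (pr_nonneg hp.1 _)
    (fun _ => mul_nonneg (pr_nonneg hp.1 _ _) (pr_nonneg hp.1 _ _))
    (fun _ h => (pr_pos_of_pr_pair_pos hp.1 X Y h).elim mul_pos) ?_
  rw [sum_pr_mul_pr hp, sum_pr hp]

lemma indepRV_of_ent_pair_eq_add [Fintype α] [Fintype β] (hp : IsPMF p) (X : Ω → α) (Y : Ω → β)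
    (h : ent p (fun ω => (X ω, Y ω)) = ent p X + ent p Y) : IndepRV p X Y := by
  rw [ent_eq_sum_univ (fun ω => (X ω, Y ω)), ent_add_ent_eq_sum hp.1, neg_inj] at h
  have := eq_of_sum_mul_logb_le (pr_nonneg hp.1 _)
    (fun _ => mul_nonneg (pr_nonneg hp.1 _ _) (pr_nonneg hp.1 _ _))
    (fun _ h => (pr_pos_of_pr_pair_pos hp.1 X Y h).elim mul_pos)
    (by rw [sum_pr_mul_pr hp, sum_pr hp]) h.le
  exact fun x y => congrFun this (x, y)

lemma condEnt_nonneg (hp : ∀ ω, 0 ≤ p ω) (A : Ω → α) (C : Ω → γ) : 0 ≤ condEnt p A C :=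
  sub_nonneg.2 (ent_comp_le hp (fun ω => (A ω, C ω)) Prod.snd)

lemma condEnt_le_ent [Fintype α] [Fintype γ] (hp : IsPMF p) (A : Ω → α) (C : Ω → γ) :
    condEnt p A C ≤ ent p A :=
  sub_le_iff_le_add.2 (ent_pair_le_add hp A C)

lemma cmi_eq_condEnt_sub_condEnt (A : Ω → α) (B : Ω → β) (C : Ω → γ) :
    cmi p A B C = condEnt p A C - condEnt p A (fun ω => (B ω, C ω)) := by
  simp only [cmi, condEnt]
  ring

lemma cmi_eq_condEnt_sub_condEnt' (hp : ∀ ω, 0 ≤ p ω) (A : Ω → α) (B : Ω → β) (C : Ω → γ) :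
    cmi p A B C = condEnt p B C - condEnt p B (fun ω => (A ω, C ω)) := by
  have hswap : ent p (fun ω => (A ω, B ω, C ω)) = ent p (fun ω => (B ω, A ω, C ω)) :=
    ent_eq_of_comp hp (fun abc => (abc.2.1, abc.1, abc.2.2)) (fun bac => (bac.2.1, bac.1, bac.2.2))
      (fun _ => rfl) (fun _ => rfl)
  simp only [cmi, condEnt, hswap]
  ring

lemma condEnt_le_one_of_eq_comp_bool [Fintype γ] (hp : IsPMF p) (B : Ω → Bool) (C : Ω → γ)
    {Y : Ω → β} (f : Bool × γ → β) (hY : ∀ ω, Y ω = f (B ω, C ω)) : condEnt p Y C ≤ 1 := by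
  have hYC : ent p (fun ω => (Y ω, C ω)) ≤ ent p (fun ω => (B ω, C ω)) := by
    simpa only [hY] using ent_comp_le hp.1 (fun ω => (B ω, C ω)) fun bc => (f bc, bc.2)
  linarith [ent_pair_le_add hp B C, ent_le_one_of_bool hp B, show condEnt p Y C
    = ent p (fun ω => (Y ω, C ω)) - ent p C from rfl]

lemma ent_eq_one_of_one_le_cmi [Fintype γ] (hp : IsPMF p) (A : Ω → Bool) (B : Ω → β)
    (C : Ω → γ) (h : 1 ≤ cmi p A B C) : ent p A = 1 := by
  linarith [cmi_eq_condEnt_sub_condEnt (p := p) A B C, condEnt_nonneg hp.1 A fun ω => (B ω, C ω),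
    condEnt_le_ent hp A C, ent_le_one_of_bool hp A]

lemma indepRV_of_one_le_cmi [Fintype γ] (hp : IsPMF p) (A : Ω → Bool) (B : Ω → β)
    (C : Ω → γ) (h : 1 ≤ cmi p A B C) : IndepRV p A C := by
  refine indepRV_of_ent_pair_eq_add hp A C (le_antisymm (ent_pair_le_add hp A C) ?_)
  linarith [cmi_eq_condEnt_sub_condEnt (p := p) A B C, condEnt_nonneg hp.1 A fun ω => (B ω, C ω),
    ent_le_one_of_bool hp A, show condEnt p A C = ent p (fun ω => (A ω, C ω)) - ent p C from rfl]

lemma condEnt_eq_zero_of_condEnt_le_cmi (hp : ∀ ω, 0 ≤ p ω) {A : Ω → α} {B : Ω → β}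
    {C : Ω → γ} (h : condEnt p B C ≤ cmi p A B C) : condEnt p B (fun ω => (A ω, C ω)) = 0 := by
  linarith [cmi_eq_condEnt_sub_condEnt' hp A B C, condEnt_nonneg hp B fun ω => (A ω, C ω)]

end Entropy

section Independence

variable {Ω α β γ δ : Type*} [Fintype Ω] {p : Ω → ℝ}

lemma pr_pair_comp_right [Fintype β] (X : Ω → α) (Y : Ω → β) (f : β → γ) (x : α) (c : γ) :
    pr p (fun ω => (X ω, f (Y ω))) (x, c)
      = ∑ y ∈ Finset.univ.filter (fun y => f y = c), pr p (fun ω => (X ω, Y ω)) (x, y) := by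
  simp only [pr, Prod.mk.injEq, ite_and]
  rw [Finset.sum_comm]
  exact Finset.sum_congr rfl fun ω _ => by by_cases hx : X ω = x <;> simp [hx]

lemma pr_comp [Fintype β] (Y : Ω → β) (f : β → γ) (c : γ) :
    pr p (fun ω => f (Y ω)) c = ∑ y ∈ Finset.univ.filter (fun y => f y = c), pr p Y y := by
  simp only [pr]
  rw [Finset.sum_comm]
  exact Finset.sum_congr rfl fun ω _ => by simp

lemma IndepRV.comp_right [Fintype β] {X : Ω → α} {Y : Ω → β} (h : IndepRV p X Y) (f : β → γ) :
    IndepRV p X (fun ω => f (Y ω)) := by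
  intro x c
  rw [pr_pair_comp_right, pr_comp Y f c, Finset.mul_sum]
  exact Finset.sum_congr rfl fun y _ => h x y

lemma IndepRV.pair_of_pr_eq_mul [Fintype α] {W : Ω → γ} {A : Ω → α} {B : Ω → β}
    (h : IndepRV p A B) (c : γ → β → ℝ)
    (hc : ∀ w a b, pr p (fun ω => (W ω, A ω, B ω)) (w, a, b)
      = c w b * pr p (fun ω => (A ω, B ω)) (a, b)) :
    IndepRV p A (fun ω => (W ω, B ω)) := by
  have hswap : ∀ a w b, pr p (fun ω => (A ω, W ω, B ω)) (a, w, b)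
      = pr p (fun ω => (W ω, A ω, B ω)) (w, a, b) := fun a w b =>
    pr_congr fun ω => by simp only [Prod.mk.injEq]; tauto
  have hWB : ∀ w b, pr p (fun ω => (W ω, B ω)) (w, b) = c w b * pr p B b := fun w b => by
    simp only [pr_eq_sum_pr_pair A (fun ω => (W ω, B ω)), pr_eq_sum_pr_pair A B, hswap, hc,
      Finset.mul_sum]
  rintro a ⟨w, b⟩
  rw [hswap, hc, hWB, h a b]
  ring

lemma pr_eq_mul_pr_pair_of_factorization [Fintype α] [Fintype β] {S : Ω → α} {V : Ω → β}
    {X₁ : Ω → γ} {X₂ : Ω → δ} (Q : α → ℝ) (P₂ : δ → ℝ) (P₁₂ : γ → δ → ℝ) (PV : α → δ → β → ℝ)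
    (hQ : ∑ s, Q s = 1) (hPV : ∀ s x₂, ∑ v, PV s x₂ v = 1)
    (h : ∀ s v x₁ x₂, pr p (fun ω => (S ω, V ω, X₁ ω, X₂ ω)) (s, v, x₁, x₂)
      = Q s * P₂ x₂ * P₁₂ x₁ x₂ * PV s x₂ v) (s : α) (v : β) (x₁ : γ) (x₂ : δ) :
    pr p (fun ω => ((S ω, V ω), X₁ ω, X₂ ω)) ((s, v), x₁, x₂)
      = Q s * PV s x₂ v * pr p (fun ω => (X₁ ω, X₂ ω)) (x₁, x₂) := by
  have hassoc : ∀ s v x₁ x₂, pr p (fun ω => ((S ω, V ω), X₁ ω, X₂ ω)) ((s, v), x₁, x₂)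
      = pr p (fun ω => (S ω, V ω, X₁ ω, X₂ ω)) (s, v, x₁, x₂) := fun s v x₁ x₂ =>
    pr_congr fun ω => by simp only [Prod.mk.injEq, and_assoc]
  have hX : pr p (fun ω => (X₁ ω, X₂ ω)) (x₁, x₂) = P₂ x₂ * P₁₂ x₁ x₂ := by
    rw [pr_eq_sum_pr_pair fun ω => (S ω, V ω), Fintype.sum_prod_type]
    simp only [hassoc, h, ← Finset.mul_sum, hPV, ← Finset.sum_mul, hQ]
    ring
  rw [hassoc, h, hX]
  ring

end Independence

lemma sum_QS2 (p₀ : ℝ) : ∑ s, QS2 p₀ s = 1 := by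
  simp [QS2, Fintype.sum_prod_type]
  ring

theorem example2_inner_bound_consequences_general
    {Ω 𝒱 : Type*} [Fintype Ω] [Fintype 𝒱]
    (p₀ : ℝ)
    (p : Ω → ℝ) (hp : IsPMF p)
    (S : Ω → Bool × Bool) (V : Ω → 𝒱) (X₁ X₂ : Ω → Bool) (Y : Ω → Bool × Bool)
    (hform : ∃ (PX2 : Bool → ℝ) (PX12 : Bool → Bool → ℝ) (PV : Bool × Bool → Bool → 𝒱 → ℝ),
      (∀ x2, 0 ≤ PX2 x2) ∧ (∑ x2, PX2 x2 = 1) ∧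
      (∀ x1 x2, 0 ≤ PX12 x1 x2) ∧ (∀ x2, ∑ x1, PX12 x1 x2 = 1) ∧
      (∀ s x2 v, 0 ≤ PV s x2 v) ∧ (∀ s x2, ∑ v, PV s x2 v = 1) ∧
      (∀ s v x1 x2, pr p (fun ω => (S ω, V ω, X₁ ω, X₂ ω)) (s, v, x1, x2)
          = QS2 p₀ s * PX2 x2 * PX12 x1 x2 * PV s x2 v))
    (hY : ∀ ω, Y ω = (Bool.xor (X₁ ω) (if X₁ ω = X₂ ω then (S ω).1 else (S ω).2), X₂ ω))
    (hI : 1 ≤ cmi p X₁ Y (fun ω => (V ω, X₂ ω))) :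
    ent p X₁ = 1 ∧
    IndepRV p X₁ (fun ω => (S ω, V ω, X₂ ω)) ∧
    condEnt p (fun ω => if X₁ ω = X₂ ω then (S ω).1 else (S ω).2)
      (fun ω => (V ω, X₁ ω, X₂ ω)) = 0 := by
  obtain ⟨PX2, PX12, PV, -, -, -, -, -, hPV, hjoint⟩ := hform
  have hY_le : condEnt p Y (fun ω => (V ω, X₂ ω)) ≤ 1 :=
    condEnt_le_one_of_eq_comp_bool hp _ _ (fun bz => (bz.1, bz.2.2)) hY
  refine ⟨ent_eq_one_of_one_le_cmi hp X₁ Y _ hI, ?_, ?_⟩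
  · have hX₂ : IndepRV p X₁ X₂ := (indepRV_of_one_le_cmi hp X₁ Y _ hI).comp_right Prod.snd
    have hmarkov := pr_eq_mul_pr_pair_of_factorization _ _ _ _ (sum_QS2 p₀) hPV hjoint
    have hSV : IndepRV p X₁ (fun ω => ((S ω, V ω), X₂ ω)) :=
      hX₂.pair_of_pr_eq_mul (fun sv x₂ => QS2 p₀ sv.1 * PV sv.1 x₂ sv.2) fun ⟨s, v⟩ => hmarkov s v
    exact hSV.comp_right fun svx => (svx.1.1, svx.1.2, svx.2)
  · have hjoint_ent :
        ent p (fun ω => (if X₁ ω = X₂ ω then (S ω).1 else (S ω).2, V ω, X₁ ω, X₂ ω))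
          = ent p (fun ω => (Y ω, X₁ ω, V ω, X₂ ω)) :=
      ent_eq_of_comp hp.1 (fun t => ((Bool.xor t.2.2.1 t.1, t.2.2.2), t.2.2.1, t.2.1, t.2.2.2))
        (fun y => (Bool.xor y.2.1 y.1.1, y.2.2.1, y.2.1, y.2.2.2)) (fun ω => by simp [hY])
        (fun ω => by simp [hY])
    have hcond_ent : ent p (fun ω => (V ω, X₁ ω, X₂ ω)) = ent p (fun ω => (X₁ ω, V ω, X₂ ω)) :=
      ent_eq_of_comp hp.1 (fun t => (t.2.1, t.1, t.2.2)) (fun t => (t.2.1, t.1, t.2.2))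
        (fun _ => rfl) (fun _ => rfl)
    have hY_det := condEnt_eq_zero_of_condEnt_le_cmi hp.1 (hY_le.trans hI)
    simp only [condEnt] at hY_det ⊢
    linarith

/-- **Example 2, converse part (first step).**  If `(S,V,X₁,X₂)` has the inner-bound
product form `Q_S(s₀,s₁)·P_{X₂}(x₂)·P_{X₁|X₂}(x₁|x₂)·P_{V|S,X₂}(v|s₀,s₁,x₂)` (with `Q_S`
the law of the i.i.d. pair `(S₀,S₁)`), `Y = (X₁ ⊕ S_{X₁⊕X₂}, X₂)` and
`I(X₁;Y|V,X₂) ≥ 1`, then `H(X₁) = 1`, `X₁` is independent of `(S,V,X₂)` and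
`H(S_{X₁⊕X₂} | V,X₁,X₂) = 0`. -/
theorem example2_inner_bound_consequences
    {Ω 𝒱 : Type*} [Fintype Ω] [Fintype 𝒱]
    (p₀ : ℝ) (h₀ : 0 ≤ p₀) (h₁ : p₀ ≤ 1/2) (hh : binEnt p₀ = 1/2)
    (p : Ω → ℝ) (hp : IsPMF p)
    (S : Ω → Bool × Bool) (V : Ω → 𝒱) (X₁ X₂ : Ω → Bool) (Y : Ω → Bool × Bool)
    (hform : ∃ (PX2 : Bool → ℝ) (PX12 : Bool → Bool → ℝ) (PV : Bool × Bool → Bool → 𝒱 → ℝ),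
      (∀ x2, 0 ≤ PX2 x2) ∧ (∑ x2, PX2 x2 = 1) ∧
      (∀ x1 x2, 0 ≤ PX12 x1 x2) ∧ (∀ x2, ∑ x1, PX12 x1 x2 = 1) ∧
      (∀ s x2 v, 0 ≤ PV s x2 v) ∧ (∀ s x2, ∑ v, PV s x2 v = 1) ∧
      (∀ s v x1 x2, pr p (fun ω => (S ω, V ω, X₁ ω, X₂ ω)) (s, v, x1, x2)
          = QS2 p₀ s * PX2 x2 * PX12 x1 x2 * PV s x2 v))
    (hY : ∀ ω, Y ω = (Bool.xor (X₁ ω) (if X₁ ω = X₂ ω then (S ω).1 else (S ω).2), X₂ ω))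
    (hI : 1 ≤ cmi p X₁ Y (fun ω => (V ω, X₂ ω))) :
    ent p X₁ = 1 ∧
    IndepRV p X₁ (fun ω => (S ω, V ω, X₂ ω)) ∧
    condEnt p (fun ω => if X₁ ω = X₂ ω then (S ω).1 else (S ω).2)
      (fun ω => (V ω, X₁ ω, X₂ ω)) = 0 :=
  example2_inner_bound_consequences_general p₀ p hp S V X₁ X₂ Y hform hY hI
end

section
/- For every p ∈ [0,1], g(p,1/2) - h₂(p) = 1 - h₂(p)/2, where g(p,q₂) = -p q₂ log₂(p q₂) - (1-p)(1-q₂) log₂((1-p)(1-q₂)) - (p*q₂) log₂(p*q₂). Consequently, sup over q₁,q₂ ∈ [0,1] of min{ h₂(q₁), g(p,q₂) - h₂(p) } is at least 1 - h₂(p)/2, which is at least 1/2; i.e., the capacity C^B_{s-c} of Example 6 satisfies C^B_{s-c} ≥ 1 - (1/2)h₂(p) ≥ 1/2. -/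
open scoped BigOperators
open Classical

noncomputable section
/-- Binary convolution `a * b = a(1-b) + b(1-a)`. -/
def bconv (a b : ℝ) : ℝ := a * (1 - b) + b * (1 - a)

/-- The function `g(p,q₂)` of Example 6. -/
def gfun (p q₂ : ℝ) : ℝ :=
  -(p * q₂ * Real.logb 2 (p * q₂))
    - (1 - p) * (1 - q₂) * Real.logb 2 ((1 - p) * (1 - q₂))
    - bconv p q₂ * Real.logb 2 (bconv p q₂)
end

/-! At `q₂ = 1/2` the convolution `p * 1/2` is `1/2`, and each of the two product terms of `g`
splits off one bit, so `g(p, 1/2) = 1 + h₂(p)/2`. Taking also `q₁ = 1/2`, where `h₂(q₁) = 1`,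
realises the value `1 - h₂(p)/2` inside the set, which is bounded by `1` since `h₂ ≤ 1`. -/

open Real

lemma binEnt_eq_binEntropy_div_log_two (a : ℝ) : binEnt a = binEntropy a / log 2 := by
  simp only [binEnt, binEntropy, logb, log_inv]
  ring

lemma binEnt_nonneg {a : ℝ} (h₀ : 0 ≤ a) (h₁ : a ≤ 1) : 0 ≤ binEnt a := by
  rw [binEnt_eq_binEntropy_div_log_two]
  exact div_nonneg (binEntropy_nonneg h₀ h₁) (log_nonneg one_le_two)

lemma binEnt_le_one (a : ℝ) : binEnt a ≤ 1 := by
  rw [binEnt_eq_binEntropy_div_log_two, div_le_one (log_pos one_lt_two)]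
  exact binEntropy_le_log_two

lemma logb_two_half : logb 2 (1 / 2 : ℝ) = -1 := by
  rw [one_div, logb_inv, logb_self_eq_one one_lt_two]

lemma binEnt_half : binEnt (1 / 2) = 1 := by
  norm_num [binEnt, logb_two_half]

lemma bconv_half_right (a : ℝ) : bconv a (1 / 2) = 1 / 2 := by
  unfold bconv
  ring

lemma mul_half_mul_logb_two_mul_half (x : ℝ) :
    x * (1 / 2) * logb 2 (x * (1 / 2)) = (x * logb 2 x - x) / 2 := by
  rcases eq_or_ne x 0 with rfl | hx
  · simp
  · rw [logb_mul hx (by norm_num), logb_two_half]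
    ring

lemma gfun_half (p : ℝ) : gfun p (1 / 2) = 1 + binEnt p / 2 := by
  rw [gfun, bconv_half_right, logb_two_half, show (1 : ℝ) - 1 / 2 = 1 / 2 by norm_num,
    mul_half_mul_logb_two_mul_half, mul_half_mul_logb_two_mul_half, binEnt]
  ring

/-- **Example 6, lower bound on the capacity.**  For every `p ∈ [0,1]`,
`g(p,1/2) - h₂(p) = 1 - h₂(p)/2`; consequently the supremum over `q₁,q₂ ∈ [0,1]` of
`min{h₂(q₁), g(p,q₂) - h₂(p)}` is at least `1 - h₂(p)/2`, which is at least `1/2`. -/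
theorem example6_capacity_lower_bound
    (p : ℝ) (hp : p ∈ Set.Icc (0:ℝ) 1) :
    gfun p (1/2) - binEnt p = 1 - binEnt p / 2 ∧
    (1:ℝ)/2 ≤ 1 - binEnt p / 2 ∧
    1 - binEnt p / 2 ≤
      sSup {r : ℝ | ∃ q₁ ∈ Set.Icc (0:ℝ) 1, ∃ q₂ ∈ Set.Icc (0:ℝ) 1,
        r = min (binEnt q₁) (gfun p q₂ - binEnt p)} := by
  have hg : gfun p (1/2) - binEnt p = 1 - binEnt p / 2 := by
    rw [gfun_half]
    ring
  have hent_nonneg := binEnt_nonneg hp.1 hp.2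
  have hent_le_one := binEnt_le_one p
  refine ⟨hg, by linarith, le_csSup ⟨1, ?_⟩ ⟨1/2, by norm_num, 1/2, by norm_num, ?_⟩⟩
  · rintro r ⟨q₁, -, q₂, -, rfl⟩
    exact (min_le_left _ _).trans (binEnt_le_one q₁)
  · rw [binEnt_half, hg, min_eq_right (by linarith)]
end
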